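/- Let p be an odd prime, 0 ≤ r ≤ p−1, α ∈ F_p^×, and let ρ = Sym^{2r}(F̄_p²) ⊗ det^{−r} act on homogeneous polynomials of degree 2r over F̄_p. Then the vector (αx² − y²)^r is fixed by the matrix k_α = [[1,α],[1,1]] (whenever 1−α ≠ 0). -/

import Mathlib

open MvPolynomial

/-- The action of a `2 × 2` matrix `g` on homogeneous polynomials of degree `2r` in
`x = X 0`, `y = X 1` defining the representation `Sym^{2r}(F̄_p²) ⊗ det^{-r}`:
`(ρ(g)·f)(x, y) = f(ax + cy, bx + dy) · det(g)^{-r}` for `g = [[a,b],[c,d]]`. -/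
noncomputable def symDetAct (p r : ℕ) [Fact p.Prime]
    (g : Matrix (Fin 2) (Fin 2) (AlgebraicClosure (ZMod p)))
    (P : MvPolynomial (Fin 2) (AlgebraicClosure (ZMod p))) :
    MvPolynomial (Fin 2) (AlgebraicClosure (ZMod p)) :=
  C ((g.det) ^ r)⁻¹ *
    MvPolynomial.bind₁
      ![C (g 0 0) * X 0 + C (g 1 0) * X 1, C (g 0 1) * X 0 + C (g 1 1) * X 1] P

/- `!![u, a * v; v, u]` is multiplication by `u + v√a` on `R[√a]` and `a x² - y²` is, up to sign,
the norm form, so by multiplicativity of the norm it is scaled by `u² - a v²`. -/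
theorem bind₁_normForm {R : Type*} [CommRing R] (a u v : R) :
    bind₁ (![C u * X 0 + C v * X 1, C (a * v) * X 0 + C u * X 1] :
        Fin 2 → MvPolynomial (Fin 2) R) (C a * X 0 ^ 2 - X 1 ^ 2) =
      C (!![u, a * v; v, u].det) * (C a * X 0 ^ 2 - X 1 ^ 2) := by
  simp only [Matrix.det_fin_two_of, map_sub, map_mul, map_pow, bind₁_X_right, bind₁_C_right,
    Matrix.cons_val_zero, Matrix.cons_val_one]
  ring

theorem symDetAct_pow_eq_self {p : ℕ} [Fact p.Prime] (r : ℕ)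
    {g : Matrix (Fin 2) (Fin 2) (AlgebraicClosure (ZMod p))}
    {Q : MvPolynomial (Fin 2) (AlgebraicClosure (ZMod p))} (hdet : g.det ≠ 0)
    (hQ : bind₁ ![C (g 0 0) * X 0 + C (g 1 0) * X 1, C (g 0 1) * X 0 + C (g 1 1) * X 1] Q =
      C g.det * Q) :
    symDetAct p r g (Q ^ r) = Q ^ r := by
  rw [symDetAct, map_pow, hQ, mul_pow, ← C_pow, ← mul_assoc, ← C_mul,
    inv_mul_cancel₀ (pow_ne_zero r hdet), C_1, one_mul]

theorem stmt_9_general (p : ℕ) [Fact p.Prime] (r : ℕ)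
    (α : (ZMod p)ˣ) (hα : (α : ZMod p) ≠ 1) :
    symDetAct p r
        !![1, algebraMap (ZMod p) (AlgebraicClosure (ZMod p)) (α : ZMod p); 1, 1]
        ((C (algebraMap (ZMod p) (AlgebraicClosure (ZMod p)) (α : ZMod p)) * X 0 ^ 2 -
            X 1 ^ 2) ^ r) =
      (C (algebraMap (ZMod p) (AlgebraicClosure (ZMod p)) (α : ZMod p)) * X 0 ^ 2 -
          X 1 ^ 2) ^ r := by
  set a := algebraMap (ZMod p) (AlgebraicClosure (ZMod p)) (α : ZMod p)
  have hk : !![1, a; 1, 1] = !![1, a * 1; 1, 1] := by rw [mul_one]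
  have hdet : (!![1, a * 1; 1, 1] : Matrix (Fin 2) (Fin 2) _).det ≠ 0 := by
    have ha : a ≠ 1 := by simpa [a] using hα
    simpa [Matrix.det_fin_two_of, sub_eq_zero] using ha.symm
  rw [hk]
  exact symDetAct_pow_eq_self r hdet (by simpa using bind₁_normForm a 1 1)

/-- Let `p` be an odd prime, `0 ≤ r ≤ p - 1`, `α ∈ F_p^×` with `1 - α ≠ 0`, and let
`ρ = Sym^{2r}(F̄_p²) ⊗ det^{-r}` act on homogeneous polynomials of degree `2r` over
`F̄_p`. Then `(αx² - y²)^r` is fixed by `k_α = [[1,α],[1,1]]`. -/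
theorem stmt_9 (p : ℕ) [Fact p.Prime] (hodd : Odd p) (r : ℕ) (hr : r ≤ p - 1)
    (α : (ZMod p)ˣ) (hα : (α : ZMod p) ≠ 1) :
    symDetAct p r
        !![1, algebraMap (ZMod p) (AlgebraicClosure (ZMod p)) (α : ZMod p); 1, 1]
        ((C (algebraMap (ZMod p) (AlgebraicClosure (ZMod p)) (α : ZMod p)) * X 0 ^ 2 -
            X 1 ^ 2) ^ r) =
      (C (algebraMap (ZMod p) (AlgebraicClosure (ZMod p)) (α : ZMod p)) * X 0 ^ 2 -
          X 1 ^ 2) ^ r :=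
  stmt_9_general p r α hα
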